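/- Let κ be a positive integer and u > 0. Define L_n^{κ;u}(x) = L_n^{κ}(x) - [(κ-1)! + u(n+1)_κ]/[(κ-1)! + u(n)_κ] · L_{n-1}^{κ}(x). Then for every real x and n ≥ 0, lim_{a→1} (a-1)^n m_n^{a, κ+1+(1-a)^κ/u; κ}(x/(1-a)) = L_n^{κ;u}(x), where m_n^{a,c;κ}(x) = m_n^{a,c}(x) + [a·m_κ^{1/a,2-c}(-n-1)]/[(1-a)·m_κ^{1/a,2-c}(-n)] · m_{n-1}^{a,c}(x), provided m_κ^{1/a,2-c}(-n) ≠ 0 for the relevant values of a. -/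

import Mathlib

/-!
Writing `1/a = 1 + (1 - a)/a` in the defining sum and applying Chu–Vandermonde gives
`m_n^{a,c}(x) = ∑ᵢ (a/(1-a))^(n-i) C(x,i) C(-c-i, n-i)`. After the substitution `x ↦ x/(1-a)`
and multiplication by `(a-1)^n`, each term is continuous in `a` and `c`, and its value at `a = 1`
is the corresponding term of `L_n^κ(x)`.

For the coefficient of `m_{n-1}`, the same identity gives
`(a-1)^κ m_κ^{1/a,2-c}(y) = ∑ᵢ (a-1)^i C(y,i) C(κ-1-i+ε, κ-i)` with `ε = (1-a)^κ/u`. Every term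
with `i < κ` carries the factor `ε`, which cancels `(a-1)^κ`, so `m_κ^{1/a,2-c}(y)` tends to
`C(y,κ) + (-1)^κ/(uκ)`. At `y = -n` this is `(-1)^κ ((κ-1)! + u (n)_κ)/(u κ!)`, which is nonzero.
-/
open Filter Topology Finset

/-- Generalized binomial coefficient C(y, k) = y(y-1)⋯(y-k+1)/k!. -/
noncomputable def gbinom (y : ℝ) (k : ℕ) : ℝ :=
  (∏ i ∈ Finset.range k, (y - i)) / (Nat.factorial k)

/-- Pochhammer symbol (y)_k = y(y+1)⋯(y+k-1). -/
noncomputable def poch (y : ℝ) (k : ℕ) : ℝ :=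
  ∏ i ∈ Finset.range k, (y + i)

/-- Laguerre polynomial L_n^α(x). -/
noncomputable def laguerre (n : ℕ) (α x : ℝ) : ℝ :=
  ∑ j ∈ Finset.range (n + 1), ((-x) ^ j / (Nat.factorial j)) * gbinom ((n : ℝ) + α) (n - j)

/-- Meixner polynomial m_n^{a,c}(x). -/
noncomputable def meixner (n : ℕ) (a c x : ℝ) : ℝ :=
  (a ^ n / (1 - a) ^ n) *
    ∑ j ∈ Finset.range (n + 1), (a⁻¹) ^ j * gbinom x j * gbinom (-x - c) (n - j)

/-- Krall Meixner polynomial m_n^{a,c;κ}(x). -/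
noncomputable def krallMeixner (n : ℕ) (a c : ℝ) (κ : ℕ) (x : ℝ) : ℝ :=
  meixner n a c x +
    (a * meixner κ a⁻¹ (2 - c) (-(n : ℝ) - 1)) /
      ((1 - a) * meixner κ a⁻¹ (2 - c) (-(n : ℝ))) *
      (if n = 0 then 0 else meixner (n - 1) a c x)

/-- Krall Laguerre polynomial L_n^{κ;u}(x). -/
noncomputable def krallLaguerre (n κ : ℕ) (u x : ℝ) : ℝ :=
  laguerre n κ x -
    ((Nat.factorial (κ - 1) + u * poch ((n : ℝ) + 1) κ) /
        (Nat.factorial (κ - 1) + u * poch (n : ℝ) κ)) *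
      (if n = 0 then 0 else laguerre (n - 1) κ x)

open Polynomial in
lemma gbinom_eq_choose (y : ℝ) (k : ℕ) : gbinom y k = Ring.choose y k := by
  rw [Ring.choose_eq_smul, ← aeval_eq_smeval, aeval_def, eval₂_eq_eval_map, descPochhammer_map,
    descPochhammer_eval_eq_prod_range, gbinom, smul_eq_mul, div_eq_inv_mul]

@[fun_prop]
lemma continuous_gbinom (k : ℕ) : Continuous fun y : ℝ => gbinom y k := by
  unfold gbinom; fun_prop

@[simp]
lemma gbinom_zero_right (y : ℝ) : gbinom y 0 = 1 := by simp [gbinom]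

lemma gbinom_natCast_self (k : ℕ) : gbinom k k = 1 := by
  rw [gbinom_eq_choose, Ring.choose_natCast, Nat.choose_self, Nat.cast_one]

lemma gbinom_succ (y : ℝ) (k : ℕ) : gbinom y (k + 1) = gbinom y k * (y - k) / (k + 1) := by
  simp only [gbinom, prod_range_succ, Nat.factorial_succ]
  push_cast
  field_simp

lemma gbinom_neg (y : ℝ) (k : ℕ) : gbinom (-y) k = (-1) ^ k * poch y k / k.factorial := by
  simp only [gbinom, poch, ← neg_add', prod_neg, card_range]

lemma gbinom_add_sub_one (y : ℝ) (k : ℕ) : gbinom (y + k - 1) k = poch y k / k.factorial := by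
  rw [gbinom, poch, ← prod_range_reflect (fun i : ℕ => y + i)]
  congr 1
  refine prod_congr rfl fun m hm => ?_
  rw [Nat.cast_sub (by grind), Nat.cast_sub (by grind)]
  ring

lemma poch_nonneg {t : ℝ} (ht : 0 ≤ t) (k : ℕ) : 0 ≤ poch t k :=
  prod_nonneg fun _ _ => by positivity

lemma pow_mul_gbinom_div (x : ℝ) {t : ℝ} (ht : t ≠ 0) (i : ℕ) :
    t ^ i * gbinom (x / t) i = (∏ m ∈ range i, (x - m * t)) / i.factorial := by
  rw [gbinom, mul_div_assoc']
  congr 1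
  nth_rw 1 [← card_range i]
  rw [pow_card_mul_prod]
  refine prod_congr rfl fun m _ => ?_
  field_simp

namespace Ring

variable {R : Type*} [CommRing R] [BinomialRing R]

theorem choose_add_eq_sum_range (r s : R) (k : ℕ) :
    choose (r + s) k = ∑ m ∈ range (k + 1), choose r m * choose s (k - m) := by
  rw [add_choose_eq k (Commute.all r s), Nat.sum_antidiagonal_eq_sum_range_succ
    (fun i j => choose r i * choose s j)]

theorem sum_add_one_pow_mul_choose_mul_choose (z x s : R) (n : ℕ) :
    ∑ j ∈ range (n + 1), (z + 1) ^ j * (choose x j * choose s (n - j)) =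
      ∑ i ∈ range (n + 1), z ^ i * (choose x i * choose (x - i + s) (n - i)) := by
  have inner (i : ℕ) (hi : i ≤ n) :
      ∑ j ∈ Ico i (n + 1), (j.choose i : R) * (choose x j * choose s (n - j)) =
        choose x i * choose (x - i + s) (n - i) := by
    rw [sum_Ico_eq_sum_range, show n + 1 - i = n - i + 1 by omega, choose_add_eq_sum_range,
      mul_sum]
    refine sum_congr rfl fun m _ => ?_
    rw [← mul_assoc, ← nsmul_eq_mul, choose_smul_choose x (Nat.le_add_right i m),
      Nat.add_sub_cancel_left, show n - (i + m) = n - i - m by omega, mul_assoc]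
  calc ∑ j ∈ range (n + 1), (z + 1) ^ j * (choose x j * choose s (n - j))
      = ∑ j ∈ Ico 0 (n + 1), ∑ i ∈ Ico 0 (j + 1),
          z ^ i * ((j.choose i : R) * (choose x j * choose s (n - j))) := by
        simp only [← range_eq_Ico, add_pow, one_pow, mul_one, sum_mul, mul_assoc]
    _ = ∑ i ∈ Ico 0 (n + 1), ∑ j ∈ Ico i (n + 1),
          z ^ i * ((j.choose i : R) * (choose x j * choose s (n - j))) :=
        (sum_Ico_Ico_comm 0 (n + 1) _).symm
    _ = _ := by
        rw [← range_eq_Ico]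
        refine sum_congr rfl fun i hi => ?_
        rw [← mul_sum, inner i (Nat.lt_succ_iff.mp (mem_range.mp hi))]

end Ring

lemma meixner_eq_sum (n : ℕ) {a : ℝ} (c x : ℝ) (ha : a ≠ 0) (ha1 : a ≠ 1) :
    meixner n a c x =
      ∑ i ∈ range (n + 1), (a / (1 - a)) ^ (n - i) * (gbinom x i * gbinom (-c - i) (n - i)) := by
  have hq : a / (1 - a) ≠ 0 := div_ne_zero ha (sub_ne_zero.2 (Ne.symm ha1))
  have ha_inv : a⁻¹ = (a / (1 - a))⁻¹ + 1 := by field_simp; ring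
  simp only [meixner, gbinom_eq_choose, ← div_pow, ha_inv, mul_assoc,
    Ring.sum_add_one_pow_mul_choose_mul_choose, mul_sum]
  refine sum_congr rfl fun i hi => ?_
  rw [← mul_assoc, inv_pow, ← pow_sub₀ _ hq (Nat.lt_succ_iff.mp (mem_range.mp hi))]
  ring_nf

lemma sub_one_pow_mul_meixner_div (n : ℕ) {a : ℝ} (c x : ℝ) (ha : a ≠ 0) (ha1 : a ≠ 1) :
    (a - 1) ^ n * meixner n a c (x / (1 - a)) =
      ∑ i ∈ range (n + 1), (-1) ^ n * a ^ (n - i) *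
        ((∏ m ∈ range i, (x - m * (1 - a))) / i.factorial) * gbinom (-c - i) (n - i) := by
  have h1a : 1 - a ≠ 0 := sub_ne_zero.2 (Ne.symm ha1)
  rw [meixner_eq_sum n c _ ha ha1, mul_sum]
  refine sum_congr rfl fun i hi => ?_
  obtain ⟨k, rfl⟩ := Nat.exists_eq_add_of_le (Nat.lt_succ_iff.mp (mem_range.mp hi))
  rw [← pow_mul_gbinom_div x h1a, Nat.add_sub_cancel_left, div_pow,
    show a - 1 = -(1 - a) by ring, neg_pow, pow_add, pow_add]
  field_simp

lemma laguerre_eq_sum (n : ℕ) (α x : ℝ) :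
    laguerre n α x = ∑ i ∈ range (n + 1),
      (-1) ^ n * (x ^ i / i.factorial) * gbinom (-(α + 1) - i) (n - i) := by
  refine sum_congr rfl fun i hi => ?_
  obtain ⟨k, rfl⟩ := Nat.exists_eq_add_of_le (Nat.lt_succ_iff.mp (mem_range.mp hi))
  have hsign : (-1 : ℝ) ^ (i + k) * (-1) ^ k = (-1) ^ i := by
    rw [pow_add, mul_assoc, ← pow_add, Even.neg_one_pow ⟨k, rfl⟩, mul_one]
  rw [Nat.add_sub_cancel_left, show -(α + 1) - i = -(α + 1 + i) by ring, gbinom_neg,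
    show ((i + k : ℕ) : ℝ) + α = α + 1 + i + k - 1 by push_cast; ring, gbinom_add_sub_one,
    neg_pow]
  linear_combination -(x ^ i / i.factorial * (poch (α + 1 + i) k / k.factorial)) * hsign

lemma tendsto_sub_one_pow_mul_meixner (n : ℕ) (α x : ℝ) {ε : ℝ → ℝ}
    (hε : Tendsto ε (𝓝[({0, 1} : Set ℝ)ᶜ] 1) (𝓝 0)) :
    Tendsto (fun a => (a - 1) ^ n * meixner n a (α + 1 + ε a) (x / (1 - a)))
      (𝓝[({0, 1} : Set ℝ)ᶜ] 1) (𝓝 (laguerre n α x)) := by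
  let F : ℝ × ℝ → ℝ := fun p => ∑ i ∈ range (n + 1), (-1) ^ n * p.1 ^ (n - i) *
    ((∏ m ∈ range i, (x - m * (1 - p.1))) / i.factorial) * gbinom (-(α + 1 + p.2) - i) (n - i)
  have hF : Continuous F := by fun_prop
  have hF_one : F (1, 0) = laguerre n α x := by simp [F, laguerre_eq_sum]
  have hpair : Tendsto (fun a => (a, ε a)) (𝓝[({0, 1} : Set ℝ)ᶜ] 1) (𝓝 (1, 0)) :=
    (tendsto_id.mono_left nhdsWithin_le_nhds).prodMk_nhds hε
  rw [← hF_one]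
  refine ((hF.tendsto _).comp hpair).congr' ?_
  filter_upwards [self_mem_nhdsWithin] with a ha
  simp only [Set.mem_compl_iff, Set.mem_insert_iff, Set.mem_singleton_iff, not_or] at ha
  exact (sub_one_pow_mul_meixner_div n _ x ha.1 ha.2).symm

lemma meixner_inv_eq (κ : ℕ) (ε y : ℝ) {a : ℝ} (ha : a ≠ 0) (ha1 : a ≠ 1) :
    meixner κ a⁻¹ (2 - (κ + 1 + ε)) y = gbinom y κ + ε / (a - 1) ^ κ *
      ∑ i ∈ range κ, (a - 1) ^ i * gbinom y i *
        gbinom ((κ - 1 - i : ℕ) + ε) (κ - 1 - i) / (κ - i : ℕ) := by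
  have ha1' : a - 1 ≠ 0 := sub_ne_zero.2 ha1
  have hq : a⁻¹ / (1 - a⁻¹) = (a - 1)⁻¹ := by field_simp
  rw [meixner_eq_sum κ _ y (inv_ne_zero ha) (inv_ne_one.2 ha1), hq, sum_range_succ, mul_sum,
    add_comm]
  congr 1
  · simp
  refine sum_congr rfl fun i hi => ?_
  obtain ⟨j, rfl⟩ := Nat.exists_eq_add_of_lt (mem_range.mp hi)
  rw [show i + j + 1 - 1 - i = j by omega, show i + j + 1 - i = j + 1 by omega,
    show -(2 - (((i + j + 1 : ℕ) : ℝ) + 1 + ε)) - i = j + ε by push_cast; ring, gbinom_succ,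
    add_sub_cancel_left, inv_pow, add_assoc i, pow_add (a - 1) i]
  push_cast
  field_simp

lemma tendsto_meixner_inv {κ : ℕ} (hκ : 0 < κ) (u y : ℝ) :
    Tendsto (fun a => meixner κ a⁻¹ (2 - (κ + 1 + (1 - a) ^ κ / u)) y)
      (𝓝[({0, 1} : Set ℝ)ᶜ] 1) (𝓝 (gbinom y κ + (-1) ^ κ / u / κ)) := by
  let G : ℝ → ℝ := fun a => gbinom y κ + (-1) ^ κ / u *
    ∑ i ∈ range κ, (a - 1) ^ i * gbinom y i *
      gbinom ((κ - 1 - i : ℕ) + (1 - a) ^ κ / u) (κ - 1 - i) / (κ - i : ℕ)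
  have hG : Continuous G := by fun_prop
  have hG_one : G 1 = gbinom y κ + (-1) ^ κ / u / κ := by
    obtain ⟨k, rfl⟩ := Nat.exists_eq_add_of_lt hκ
    simp [G, sum_range_succ', gbinom_natCast_self, div_eq_mul_inv]
  rw [← hG_one]
  refine (hG.tendsto 1 |>.mono_left nhdsWithin_le_nhds).congr' ?_
  filter_upwards [self_mem_nhdsWithin] with a ha
  simp only [Set.mem_compl_iff, Set.mem_insert_iff, Set.mem_singleton_iff, not_or] at ha
  have hε : (1 - a) ^ κ / u / (a - 1) ^ κ = (-1) ^ κ / u := by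
    rw [show 1 - a = -1 * (a - 1) by ring, mul_pow]
    field_simp [pow_ne_zero κ (sub_ne_zero.2 ha.2)]
  rw [meixner_inv_eq κ _ y ha.1 ha.2, hε]

lemma gbinom_neg_add_div {κ : ℕ} (hκ : 0 < κ) {u : ℝ} (hu : u ≠ 0) (t : ℝ) :
    gbinom (-t) κ + (-1) ^ κ / u / κ =
      (-1) ^ κ / (u * κ.factorial) * ((κ - 1).factorial + u * poch t κ) := by
  obtain ⟨k, rfl⟩ := Nat.exists_eq_add_of_lt hκ
  rw [gbinom_neg, zero_add, Nat.add_sub_cancel, Nat.factorial_succ]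
  push_cast
  field_simp
  ring

lemma tendsto_meixner_inv_ratio {κ : ℕ} (hκ : 0 < κ) {u : ℝ} (hu : 0 < u) {t : ℝ} (ht : 0 ≤ t) :
    Tendsto (fun a => a * meixner κ a⁻¹ (2 - (κ + 1 + (1 - a) ^ κ / u)) (-t - 1) /
        meixner κ a⁻¹ (2 - (κ + 1 + (1 - a) ^ κ / u)) (-t))
      (𝓝[({0, 1} : Set ℝ)ᶜ] 1)
      (𝓝 (((κ - 1).factorial + u * poch (t + 1) κ) / ((κ - 1).factorial + u * poch t κ))) := by
  have hpos : 0 < ((κ - 1).factorial : ℝ) + u * poch t κ :=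
    add_pos_of_pos_of_nonneg (Nat.cast_pos.2 (Nat.factorial_pos _))
      (mul_nonneg hu.le (poch_nonneg ht κ))
  have hC : (-1 : ℝ) ^ κ / (u * κ.factorial) ≠ 0 := by positivity
  have hden : gbinom (-t) κ + (-1) ^ κ / u / κ ≠ 0 := by
    rw [gbinom_neg_add_div hκ hu.ne']
    exact mul_ne_zero hC hpos.ne'
  have hvalue : (((κ - 1).factorial + u * poch (t + 1) κ) / ((κ - 1).factorial + u * poch t κ)) =
      1 * (gbinom (-t - 1) κ + (-1) ^ κ / u / κ) / (gbinom (-t) κ + (-1) ^ κ / u / κ) := by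
    rw [one_mul, show -t - 1 = -(t + 1) by ring, gbinom_neg_add_div hκ hu.ne',
      gbinom_neg_add_div hκ hu.ne', mul_div_mul_left _ _ hC]
  rw [hvalue]
  exact ((tendsto_id.mono_left nhdsWithin_le_nhds).mul (tendsto_meixner_inv hκ u _)).div
    (tendsto_meixner_inv hκ u _) hden

lemma sub_one_pow_mul_krallMeixner_succ (n κ : ℕ) (a c x : ℝ) (ha1 : a ≠ 1) :
    (a - 1) ^ (n + 1) * krallMeixner (n + 1) a c κ x =
      (a - 1) ^ (n + 1) * meixner (n + 1) a c x -
        a * meixner κ a⁻¹ (2 - c) (-((n + 1 : ℕ) : ℝ) - 1) /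
          meixner κ a⁻¹ (2 - c) (-((n + 1 : ℕ) : ℝ)) * ((a - 1) ^ n * meixner n a c x) := by
  have h1a : 1 - a ≠ 0 := sub_ne_zero.2 (Ne.symm ha1)
  rw [krallMeixner, if_neg n.succ_ne_zero, Nat.add_sub_cancel, div_mul_eq_div_div_swap]
  field_simp
  ring

theorem stmt9_general (κ : ℕ) (hκ : 0 < κ) (u : ℝ) (hu : 0 < u) (n : ℕ) (x : ℝ) :
    Tendsto
      (fun a : ℝ =>
        (a - 1) ^ n * krallMeixner n a ((κ : ℝ) + 1 + (1 - a) ^ κ / u) κ (x / (1 - a)))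
      (𝓝[({0, 1} : Set ℝ)ᶜ] (1 : ℝ)) (𝓝 (krallLaguerre n κ u x)) := by
  have hε : Tendsto (fun a : ℝ => (1 - a) ^ κ / u) (𝓝[({0, 1} : Set ℝ)ᶜ] 1) (𝓝 0) := by
    have hcont : Continuous fun a : ℝ => (1 - a) ^ κ / u := by fun_prop
    simpa [zero_pow hκ.ne'] using (hcont.tendsto 1).mono_left nhdsWithin_le_nhds
  have hmeixner (m : ℕ) := tendsto_sub_one_pow_mul_meixner m κ x hε
  cases n with
  | zero => simpa [krallMeixner, krallLaguerre] using hmeixner 0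
  | succ n =>
    rw [krallLaguerre, if_neg n.succ_ne_zero, Nat.add_sub_cancel]
    refine ((hmeixner (n + 1)).sub
      ((tendsto_meixner_inv_ratio hκ hu (n + 1).cast_nonneg).mul (hmeixner n))).congr' ?_
    filter_upwards [self_mem_nhdsWithin] with a ha
    exact (sub_one_pow_mul_krallMeixner_succ n κ a _ _ fun h => ha (by simp [h])).symm

theorem stmt9 (κ : ℕ) (hκ : 0 < κ) (u : ℝ) (hu : 0 < u) (n : ℕ) (x : ℝ)
    (hden : ∀ a : ℝ, a ≠ 0 → a ≠ 1 →
      meixner κ a⁻¹ (2 - ((κ : ℝ) + 1 + (1 - a) ^ κ / u)) (-(n : ℝ)) ≠ 0) :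
    Tendsto
      (fun a : ℝ =>
        (a - 1) ^ n * krallMeixner n a ((κ : ℝ) + 1 + (1 - a) ^ κ / u) κ (x / (1 - a)))
      (𝓝[({0, 1} : Set ℝ)ᶜ] (1 : ℝ)) (𝓝 (krallLaguerre n κ u x)) :=
  stmt9_general κ hκ u hu n x
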